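/- Let Q ∈ S^d_{>0} be eutactic, i.e., Q^{-1} = Σ_{x ∈ Min Q} α_x xxᵀ with all α_x > 0, and suppose λ(Q) = 1. Then taking the trace inner product with any Q' in the Ryshkov polyhedron R = {Q' ∈ S^d_{>0} : λ(Q') ≥ 1} gives ⟨Q^{-1}, Q'⟩ ≥ ⟨Q^{-1}, Q⟩ = d; i.e., Q minimizes the linear functional Q' ↦ trace(Q^{-1}Q') over R. -/

import Mathlib

open Matrix

/-- The quadratic form value `xᵀ Q x`. -/
noncomputable def qf {d : ℕ} (Q : Matrix (Fin d) (Fin d) ℝ) (x : Fin d → ℝ) : ℝ :=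
  x ⬝ᵥ Q.mulVec x

/-- Coordinatewise cast of an integer vector to a real vector. -/
noncomputable def intCast {d : ℕ} (x : Fin d → ℤ) : Fin d → ℝ := fun i => (x i : ℝ)

/-- The arithmetical minimum `λ(Q) = inf_{x ∈ ℤ^d \ {0}} xᵀQx`. -/
noncomputable def arithMin {d : ℕ} (Q : Matrix (Fin d) (Fin d) ℝ) : ℝ :=
  sInf {r : ℝ | ∃ x : Fin d → ℤ, x ≠ 0 ∧ r = qf Q (intCast x)}

/-- The set of minimal vectors `Min Q`. -/
def minVecs {d : ℕ} (Q : Matrix (Fin d) (Fin d) ℝ) : Set (Fin d → ℤ) :=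
  {x | x ≠ 0 ∧ qf Q (intCast x) = arithMin Q}

/-!
Writing `Q⁻¹ = ∑ α_x x xᵀ` over the minimal vectors turns `Q' ↦ ⟨Q⁻¹, Q'⟩` into
`Q' ↦ ∑ α_x Q'[x]`. At `Q` every `Q[x]` equals `λ(Q) = 1`, while on the Ryshkov polyhedron
`Q'[x] ≥ λ(Q') ≥ 1`; since the weights are positive the functional is minimal at `Q`, where it
equals `trace 1 = d`.
-/

namespace Matrix

variable {ι n R : Type*} [Fintype n] [CommSemiring R]

lemma trace_vecMulVec_self_mul (u : n → R) (M : Matrix n n R) :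
    (vecMulVec u u * M).trace = u ⬝ᵥ M *ᵥ u := by
  rw [vecMulVec_mul, trace_vecMulVec, dotProduct_comm, ← dotProduct_mulVec]

lemma trace_sum_smul_vecMulVec_mul (s : Finset ι) (c : ι → R) (v : ι → n → R)
    (M : Matrix n n R) :
    ((∑ i ∈ s, c i • vecMulVec (v i) (v i)) * M).trace = ∑ i ∈ s, c i * (v i ⬝ᵥ M *ᵥ v i) := by
  simp only [Finset.sum_mul, trace_sum, smul_mul_assoc, trace_smul, smul_eq_mul,
    trace_vecMulVec_self_mul]

end Matrix

lemma arithMin_le_qf {d : ℕ} {Q : Matrix (Fin d) (Fin d) ℝ} (hQ : Q.PosSemidef)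
    {x : Fin d → ℤ} (hx : x ≠ 0) : arithMin Q ≤ qf Q (intCast x) :=
  csInf_le ⟨0, by
    rintro _ ⟨y, -, rfl⟩
    simpa [qf] using hQ.dotProduct_mulVec_nonneg (intCast y)⟩ ⟨x, hx, rfl⟩

theorem stmt19_general (d : ℕ) (Q : Matrix (Fin d) (Fin d) ℝ) (hQ : Q.PosDef)
    (hlam : arithMin Q = 1) (hfin : (minVecs Q).Finite)
    (α : (Fin d → ℤ) → ℝ) (hα : ∀ x ∈ minVecs Q, 0 < α x)
    (heut : Q⁻¹ = ∑ x ∈ hfin.toFinset, α x • vecMulVec (intCast x) (intCast x)) :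
    (Q⁻¹ * Q).trace = (d : ℝ) ∧
    ∀ Q' : Matrix (Fin d) (Fin d) ℝ, Matrix.PosDef Q' → 1 ≤ arithMin Q' →
      (d : ℝ) ≤ (Q⁻¹ * Q').trace := by
  have hfunctional (M : Matrix (Fin d) (Fin d) ℝ) :
      (Q⁻¹ * M).trace = ∑ x ∈ hfin.toFinset, α x * qf M (intCast x) := by
    rw [heut, trace_sum_smul_vecMulVec_mul]
    rfl
  have hvalue : (Q⁻¹ * Q).trace = d := by
    rw [nonsing_inv_mul Q ((isUnit_iff_isUnit_det Q).mp hQ.isUnit), trace_one, Fintype.card_fin]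
  refine ⟨hvalue, fun Q' hQ' hmin => ?_⟩
  calc (d : ℝ) = ∑ x ∈ hfin.toFinset, α x * qf Q (intCast x) := by rw [← hvalue, hfunctional]
    _ ≤ ∑ x ∈ hfin.toFinset, α x * qf Q' (intCast x) := by
      refine Finset.sum_le_sum fun x hx => ?_
      have hxMin : x ∈ minVecs Q := hfin.mem_toFinset.mp hx
      have hQ'x : qf Q (intCast x) ≤ qf Q' (intCast x) := by
        rw [hxMin.2, hlam]
        exact hmin.trans (arithMin_le_qf hQ'.posSemidef hxMin.1)
      exact mul_le_mul_of_nonneg_left hQ'x (hα x hxMin).le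
    _ = (Q⁻¹ * Q').trace := (hfunctional Q').symm

/-- A eutactic form with arithmetical minimum 1 minimizes the linear functional
Q' ↦ trace (Q⁻¹ Q') over the Ryshkov polyhedron, with value d at Q. -/
theorem stmt19 (d : ℕ) (hd : 0 < d) (Q : Matrix (Fin d) (Fin d) ℝ) (hQ : Q.PosDef)
    (hlam : arithMin Q = 1) (hfin : (minVecs Q).Finite)
    (α : (Fin d → ℤ) → ℝ) (hα : ∀ x ∈ minVecs Q, 0 < α x)
    (heut : Q⁻¹ = ∑ x ∈ hfin.toFinset, α x • vecMulVec (intCast x) (intCast x)) :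
    (Q⁻¹ * Q).trace = (d : ℝ) ∧
    ∀ Q' : Matrix (Fin d) (Fin d) ℝ, Matrix.PosDef Q' → 1 ≤ arithMin Q' →
      (d : ℝ) ≤ (Q⁻¹ * Q').trace :=
  stmt19_general d Q hQ hlam hfin α hα heut
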